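/- On an open set M ⊂ ℂ² with coordinates (z, w), consider the almost complex structure J whose anti-holomorphic tangent bundle is spanned by ∂_{z̄} + a∂_z + b∂_w and ∂_{w̄}, for smooth complex-valued functions a, b. Then the complexified Nijenhuis tensor satisfies N_J^ℂ(∂_{z̄} + a∂_z + b∂_w, ∂_{w̄}) = ½(∂_{w̄}a)(∂_z - iJ∂_z) + (∂_{w̄}b)∂_w; consequently J is integrable if and only if ∂_{w̄}a = 0 and ∂_{w̄}b = 0. -/

import Mathlib

noncomputable section

/-- Wirtinger derivative `∂_z` on `ℂ²` viewed as a real vector space. -/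
def Dz (f : ℂ × ℂ → ℂ) (p : ℂ × ℂ) : ℂ :=
  (fderiv ℝ f p (1, 0) - Complex.I * fderiv ℝ f p (Complex.I, 0)) / 2

/-- Wirtinger derivative `∂_z̄`. -/
def Dzbar (f : ℂ × ℂ → ℂ) (p : ℂ × ℂ) : ℂ :=
  (fderiv ℝ f p (1, 0) + Complex.I * fderiv ℝ f p (Complex.I, 0)) / 2

/-- Wirtinger derivative `∂_w`. -/
def Dw (f : ℂ × ℂ → ℂ) (p : ℂ × ℂ) : ℂ :=
  (fderiv ℝ f p (0, 1) - Complex.I * fderiv ℝ f p (0, Complex.I)) / 2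

/-- Wirtinger derivative `∂_w̄`. -/
def Dwbar (f : ℂ × ℂ → ℂ) (p : ℂ × ℂ) : ℂ :=
  (fderiv ℝ f p (0, 1) + Complex.I * fderiv ℝ f p (0, Complex.I)) / 2

/-- A complexified vector field on `ℂ²`, written in the frame
`(∂_z, ∂_z̄, ∂_w, ∂_w̄)` (indices `0, 1, 2, 3`). -/
abbrev CVF := (ℂ × ℂ) → (Fin 4 → ℂ)

/-- Action of a complexified vector field on a function, as a derivation. -/
def vfAct (X : CVF) (f : ℂ × ℂ → ℂ) (p : ℂ × ℂ) : ℂ :=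
  X p 0 * Dz f p + X p 1 * Dzbar f p + X p 2 * Dw f p + X p 3 * Dwbar f p

/-- Lie bracket of complexified vector fields. -/
def lieB (X Y : CVF) : CVF := fun p i =>
  vfAct X (fun q => Y q i) p - vfAct Y (fun q => X q i) p

/-- Pointwise application of a field of endomorphisms (the almost complex structure,
extended complex-linearly to the complexified tangent bundle). -/
def jApp (Jm : (ℂ × ℂ) → ((Fin 4 → ℂ) →ₗ[ℂ] (Fin 4 → ℂ))) (X : CVF) : CVF :=
  fun p => Jm p (X p)

/-- The complexified Nijenhuis tensor,
`4N_J(X,Y) = [JX,JY] - [X,Y] - J[X,JY] - J[JX,Y]`. -/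
def nij (Jm : (ℂ × ℂ) → ((Fin 4 → ℂ) →ₗ[ℂ] (Fin 4 → ℂ))) (X Y : CVF) : CVF := fun p =>
  (4 : ℂ)⁻¹ • (lieB (jApp Jm X) (jApp Jm Y) p - lieB X Y p
    - Jm p (lieB X (jApp Jm Y) p) - Jm p (lieB (jApp Jm X) Y p))

lemma vfAct_const (X : CVF) (c : ℂ) (p : ℂ × ℂ) : vfAct X (fun _ => c) p = 0 := by
  simp [vfAct, Dz, Dzbar, Dw, Dwbar]

lemma vfAct_congr (X : CVF) {f g : ℂ × ℂ → ℂ} {p : ℂ × ℂ} (h : f =ᶠ[nhds p] g) :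
    vfAct X f p = vfAct X g p := by
  simp only [vfAct, Dz, Dzbar, Dw, Dwbar, h.fderiv_eq]

lemma Dwbar_congr {f g : ℂ × ℂ → ℂ} {p : ℂ × ℂ} (h : f =ᶠ[nhds p] g) :
    Dwbar f p = Dwbar g p := by
  simp only [Dwbar, h.fderiv_eq]

lemma Dwbar_const_mul (c : ℂ) {f : ℂ × ℂ → ℂ} {p : ℂ × ℂ} (hf : DifferentiableAt ℝ f p) :
    Dwbar (fun q => c * f q) p = c * Dwbar f p := by
  rw [Dwbar, Dwbar, fderiv_const_mul hf c]
  simp only [ContinuousLinearMap.coe_smul', Pi.smul_apply, smul_eq_mul]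
  ring

lemma Dwbar_const (c : ℂ) (p : ℂ × ℂ) : Dwbar (fun _ => c) p = 0 := by
  simp [Dwbar]

/-- On an open set `M ⊂ ℂ²`, let `J` be the almost complex structure whose
anti-holomorphic tangent bundle `T^{0,1}` is spanned by `∂_z̄ + a∂_z + b∂_w` and
`∂_w̄` (so `T^{1,0}` is spanned by the conjugate vectors `∂_z + ā∂_z̄ + b̄∂_w̄` and
`∂_w`).  Then
`N_J^ℂ(∂_z̄ + a∂_z + b∂_w, ∂_w̄) = ½(∂_w̄ a)(∂_z - iJ∂_z) + (∂_w̄ b)∂_w`;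
consequently `J` is integrable if and only if `∂_w̄ a = 0` and `∂_w̄ b = 0` on `M`
(integrability being the vanishing of the Nijenhuis tensor, which in real dimension 4
is determined by its value on this pair of vectors). -/
theorem stmt_10 (M : Set (ℂ × ℂ)) (hM : IsOpen M)
    (a b : ℂ × ℂ → ℂ) (ha : ContDiffOn ℝ (⊤ : ℕ∞) a M) (hb : ContDiffOn ℝ (⊤ : ℕ∞) b M)
    (Jm : (ℂ × ℂ) → ((Fin 4 → ℂ) →ₗ[ℂ] (Fin 4 → ℂ)))
    (hJ1 : ∀ p ∈ M, Jm p ![a p, 1, b p, 0] = (-Complex.I) • ![a p, 1, b p, 0])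
    (hJ2 : ∀ p ∈ M, Jm p ![0, 0, 0, 1] = (-Complex.I) • ![(0 : ℂ), 0, 0, 1])
    (hJ3 : ∀ p ∈ M,
      Jm p ![1, (starRingEnd ℂ) (a p), 0, (starRingEnd ℂ) (b p)]
        = Complex.I • ![1, (starRingEnd ℂ) (a p), 0, (starRingEnd ℂ) (b p)])
    (hJ4 : ∀ p ∈ M, Jm p ![0, 0, 1, 0] = Complex.I • ![(0 : ℂ), 0, 1, 0]) :
    (∀ p ∈ M,
      nij Jm (fun q => ![a q, 1, b q, 0]) (fun _ => ![0, 0, 0, 1]) p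
        = (Dwbar a p / 2) • (![1, 0, 0, 0] - Complex.I • Jm p ![1, 0, 0, 0])
          + Dwbar b p • ![0, 0, 1, 0]) ∧
    ((∀ p ∈ M, nij Jm (fun q => ![a q, 1, b q, 0]) (fun _ => ![0, 0, 0, 1]) p = 0) ↔
      ∀ p ∈ M, Dwbar a p = 0 ∧ Dwbar b p = 0) := by
  have key : ∀ p ∈ M,
      nij Jm (fun q => ![a q, 1, b q, 0]) (fun _ => ![0, 0, 0, 1]) p
        = (Dwbar a p / 2) • (![1, 0, 0, 0] - Complex.I • Jm p ![1, 0, 0, 0])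
          + Dwbar b p • ![0, 0, 1, 0] := by
    intro p hp
    have hpn : M ∈ nhds p := hM.mem_nhds hp
    have hda : DifferentiableAt ℝ a p := (ha.differentiableOn (by simp)).differentiableAt hpn
    have hdb : DifferentiableAt ℝ b p := (hb.differentiableOn (by simp)).differentiableAt hpn
    have hdX : ∀ i : Fin 4, DifferentiableAt ℝ (fun q => (![a q, 1, b q, 0] : Fin 4 → ℂ) i) p := by
      intro i
      fin_cases i <;> simp <;>
        first
          | exact hda
          | exact hdb
          | exact differentiableAt_const _
    have hXc : ∀ i : Fin 4,
        (fun q => jApp Jm (fun r => ![a r, 1, b r, 0]) q i)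
          =ᶠ[nhds p] (fun q => -Complex.I * (![a q, 1, b q, 0] : Fin 4 → ℂ) i) := by
      intro i
      filter_upwards [hpn] with q hq
      simp [jApp, hJ1 q hq]
    have hYc : ∀ i : Fin 4,
        (fun q => jApp Jm (fun _ => ![0, 0, 0, 1]) q i)
          =ᶠ[nhds p] (fun _ => -Complex.I * (![(0:ℂ), 0, 0, 1] : Fin 4 → ℂ) i) := by
      intro i
      filter_upwards [hpn] with q hq
      simp [jApp, hJ2 q hq]
    have hDX' : ∀ i : Fin 4,
        Dwbar (fun q => jApp Jm (fun r => ![a r, 1, b r, 0]) q i) p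
          = -Complex.I * Dwbar (fun q => (![a q, 1, b q, 0] : Fin 4 → ℂ) i) p :=
      fun i => (Dwbar_congr (hXc i)).trans (Dwbar_const_mul _ (hdX i))
    have hDwb : ∀ i : Fin 4,
        Dwbar (fun q => (![a q, 1, b q, 0] : Fin 4 → ℂ) i) p
          = (![Dwbar a p, 0, Dwbar b p, 0] : Fin 4 → ℂ) i := by
      intro i
      fin_cases i <;> simp [Dwbar_const]
    have hXp : jApp Jm (fun r => ![a r, 1, b r, 0]) p = (-Complex.I) • ![a p, 1, b p, 0] := by
      simpa [jApp] using hJ1 p hp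
    have hYp : jApp Jm (fun _ : ℂ × ℂ => ![0, 0, 0, 1]) p
        = (-Complex.I) • ![(0:ℂ), 0, 0, 1] := by
      simpa [jApp] using hJ2 p hp
    have hL1 : lieB (jApp Jm (fun q => ![a q, 1, b q, 0])) (jApp Jm (fun _ => ![0, 0, 0, 1])) p
        = ![Dwbar a p, 0, Dwbar b p, 0] := by
      funext i
      simp only [lieB]
      rw [vfAct_congr _ (hYc i), vfAct_const]
      simp only [vfAct, hYp, hDX' i, hDwb i]
      fin_cases i <;> simp
      all_goals (ring_nf; try simp [Complex.I_sq]; try ring_nf)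
    have hL2 : lieB (fun q => ![a q, 1, b q, 0]) (fun _ => ![0, 0, 0, 1]) p
        = -![Dwbar a p, 0, Dwbar b p, 0] := by
      funext i
      simp only [lieB]
      rw [vfAct_const]
      simp only [vfAct, hDwb i]
      fin_cases i <;> simp
    have hL3 : lieB (fun q => ![a q, 1, b q, 0]) (jApp Jm (fun _ => ![0, 0, 0, 1])) p
        = Complex.I • ![Dwbar a p, 0, Dwbar b p, 0] := by
      funext i
      simp only [lieB]
      rw [vfAct_congr _ (hYc i), vfAct_const]
      simp only [vfAct, hYp, hDwb i]
      fin_cases i <;> simp <;> ring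
    have hL4 : lieB (jApp Jm (fun q => ![a q, 1, b q, 0])) (fun _ => ![0, 0, 0, 1]) p
        = Complex.I • ![Dwbar a p, 0, Dwbar b p, 0] := by
      funext i
      simp only [lieB]
      rw [vfAct_const]
      simp only [vfAct, hDX' i, hDwb i]
      fin_cases i <;> simp
      all_goals (ring_nf; try simp [Complex.I_sq]; try ring_nf)
    have hDv : (![Dwbar a p, 0, Dwbar b p, 0] : Fin 4 → ℂ)
        = Dwbar a p • ![1, 0, 0, 0] + Dwbar b p • ![0, 0, 1, 0] := by
      funext i; fin_cases i <;> simp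
    simp only [nij, hL1, hL2, hL3, hL4]
    rw [map_smul, hDv, map_add, map_smul, map_smul, hJ4 p hp]
    funext i
    simp only [Pi.smul_apply, Pi.add_apply, Pi.sub_apply, Pi.neg_apply, smul_eq_mul]
    fin_cases i <;> simp
    all_goals (ring_nf; try simp [Complex.I_sq]; try ring_nf)
  refine ⟨key, ?_, ?_⟩
  · intro h p hp
    have h0 := (key p hp).symm.trans (h p hp)
    -- the algebraic identity forcing `u 0 ≠ 0`
    have hc : (1 - a p * (starRingEnd ℂ) (a p)) •
        ((![1, 0, 0, 0] : Fin 4 → ℂ) - Complex.I • Jm p ![1, 0, 0, 0])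
        = ![2, 2 * (starRingEnd ℂ) (a p), 2 * (starRingEnd ℂ) (a p) * b p,
            2 * (starRingEnd ℂ) (b p)] := by
      have h1 : (1 - a p * (starRingEnd ℂ) (a p)) • (![1, 0, 0, 0] : Fin 4 → ℂ)
          = ![1, (starRingEnd ℂ) (a p), 0, (starRingEnd ℂ) (b p)]
            - (starRingEnd ℂ) (a p) • ![a p, 1, b p, 0]
            + ((starRingEnd ℂ) (a p) * b p) • ![0, 0, 1, 0]
            - (starRingEnd ℂ) (b p) • ![0, 0, 0, 1] := by
        funext i; fin_cases i <;> simp <;> ring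
      have h2 : (1 - a p * (starRingEnd ℂ) (a p)) • Jm p ![1, 0, 0, 0]
          = Complex.I • ![1, (starRingEnd ℂ) (a p), 0, (starRingEnd ℂ) (b p)]
            + ((starRingEnd ℂ) (a p) * Complex.I) • ![a p, 1, b p, 0]
            + ((starRingEnd ℂ) (a p) * b p * Complex.I) • ![0, 0, 1, 0]
            + ((starRingEnd ℂ) (b p) * Complex.I) • ![0, 0, 0, 1] := by
        rw [← map_smul, h1]
        simp only [map_sub, map_add, map_smul, hJ1 p hp, hJ2 p hp, hJ3 p hp, hJ4 p hp]
        funext i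
        simp only [Pi.smul_apply, Pi.add_apply, Pi.sub_apply, Pi.neg_apply, smul_eq_mul]
        fin_cases i <;> simp <;> ring
      rw [smul_sub, smul_comm, h2, h1]
      funext i
      simp only [Pi.smul_apply, Pi.add_apply, Pi.sub_apply, Pi.neg_apply, smul_eq_mul]
      fin_cases i <;> simp
      all_goals (ring_nf; try simp [Complex.I_sq]; try ring_nf)
    have hu0 : ((![1, 0, 0, 0] : Fin 4 → ℂ) - Complex.I • Jm p ![1, 0, 0, 0]) 0 ≠ 0 := by
      intro h00
      have h4 := congrFun hc 0
      rw [Pi.smul_apply, h00, smul_zero] at h4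
      simp at h4
    have ha0 : Dwbar a p = 0 := by
      have h0' := congrFun h0 0
      simp at h0'
      rcases h0' with h0' | h0'
      · exact h0'
      · exact absurd h0' hu0
    refine ⟨ha0, ?_⟩
    have h2' := congrFun h0 2
    simp [ha0] at h2'
    exact h2'
  · intro h p hp
    rw [key p hp, (h p hp).1, (h p hp).2]
    simp
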